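/- arXiv:2109.04891 — 8 statements merged into one kernel-verified Lean document; each statement's English description precedes it below -/
import Mathlib

section
/- For integers n, m with 0 ≤ m and 2(m+1) < n, we have ∑_{k=0}^{m} binom(n,k) ≤ ((m+1)/(n-2m-2))·binom(n, m+1). -/
/-!
Induction on `m`. Adding `choose n (m + 1)` to the bound for `m` gives
`(n - m - 1) / (n - 2m - 2) · choose n (m + 1)`; enlarging the denominator to `n - 2m - 4` and
using `(m + 2) · choose n (m + 2) = (n - m - 1) · choose n (m + 1)` turns this into the bound
for `m + 1`.
-/

open Finset

theorem Nat.cast_succ_mul_choose_succ {R : Type*} [CommRing R] (n k : ℕ) :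
    ((k : R) + 1) * n.choose (k + 1) = ((n : R) - k) * n.choose k := by
  rcases le_or_gt k n with hk | hk
  · have h := congrArg (Nat.cast (R := R)) (Nat.choose_succ_right_eq n k)
    push_cast [hk] at h
    linear_combination h
  · simp [Nat.choose_eq_zero_of_lt hk, Nat.choose_eq_zero_of_lt (Nat.lt_succ_of_lt hk)]

theorem sum_range_choose_le_div_mul_choose {K : Type*} [Field K] [LinearOrder K]
    [IsStrictOrderedRing K] (n m : ℕ) (h : 2 * (m + 1) < n) :
    ∑ k ∈ range (m + 1), (n.choose k : K) ≤ (m + 1) / ((n : K) - 2 * m - 2) * n.choose (m + 1) := by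
  induction m with
  | zero =>
    have hn : (3 : K) ≤ n := by exact_mod_cast h
    rw [sum_range_one, Nat.choose_zero_right, Nat.choose_one_right, Nat.cast_one, Nat.cast_zero,
      div_mul_eq_mul_div, le_div_iff₀ (by linarith)]
    linarith
  | succ m ih =>
    have hn : (2 * m + 5 : K) ≤ n := by exact_mod_cast h
    have hd : (n : K) - 2 * m - 2 ≠ 0 := by linarith
    have hrec := Nat.cast_succ_mul_choose_succ (R := K) n (m + 1)
    push_cast at hrec ⊢
    calc ∑ k ∈ range (m + 1 + 1), (n.choose k : K)
        ≤ (m + 1) / ((n : K) - 2 * m - 2) * n.choose (m + 1) + n.choose (m + 1) := by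
          rw [sum_range_succ]; gcongr; exact ih (by omega)
      _ = ((n : K) - m - 1) / ((n : K) - 2 * m - 2) * n.choose (m + 1) := by
          rw [div_mul_eq_mul_div, div_mul_eq_mul_div, eq_div_iff hd, add_mul, div_mul_cancel₀ _ hd]
          ring
      _ ≤ ((n : K) - m - 1) / ((n : K) - 2 * m - 4) * n.choose (m + 1) := by
          gcongr <;> linarith
      _ = (m + 1 + 1) / ((n : K) - 2 * (m + 1) - 2) * n.choose (m + 1 + 1) := by
          rw [div_mul_eq_mul_div, div_mul_eq_mul_div, hrec]; ring

/-- For `0 ≤ m` and `2(m+1) < n`,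
`∑_{k=0}^{m} binom(n,k) ≤ ((m+1)/(n-2m-2))·binom(n, m+1)`. -/
theorem stmt1 (n m : ℕ) (h : 2 * (m + 1) < n) :
    (∑ k ∈ Finset.range (m + 1), (n.choose k : ℚ)) ≤
      ((m + 1 : ℚ) / ((n : ℚ) - 2 * m - 2)) * (n.choose (m + 1)) :=
  sum_range_choose_le_div_mul_choose n m h
end

section
/- Define w_m = binom(n, m+1)·(m+1) / (∑_{k=0}^m binom(n,k)) for 0 ≤ m < n. Then the sequence (w_m) is nonincreasing in m, i.e., w_{m+1} ≤ w_m for all m with m+1 < n. -/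
/-!
Write `V m = ∑_{k ≤ m} C(n,k)` and `c j = C(n,j)`. Since `(m+2) c(m+2) = (n-m-1) c(m+1)` and
`V (m+1) = V m + c(m+1)`, the inequality `w (m+1) ≤ w m` cross-multiplies to
`(n - 2(m+1)) V m ≤ (m+1) c(m+1)`, which follows by induction on `m` from the same two identities.
-/

open Finset

section

variable {R : Type*} [CommRing R]

theorem Nat.cast_choose_succ_mul (n k : ℕ) :
    (n.choose (k + 1) : R) * (k + 1) = ((n : R) - k) * n.choose k := by
  rcases le_or_gt k n with hkn | hnk
  · have h := congrArg (Nat.cast (R := R)) (Nat.choose_succ_right_eq n k)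
    push_cast [Nat.cast_sub hkn] at h
    rw [h, mul_comm]
  · simp [Nat.choose_eq_zero_of_lt hnk, Nat.choose_eq_zero_of_lt (Nat.lt_succ_of_lt hnk)]

variable [LinearOrder R] [IsStrictOrderedRing R]

theorem sub_two_mul_mul_sum_range_choose_le (n m : ℕ) :
    ((n : R) - 2 * (m + 1)) * ∑ k ∈ range (m + 1), (n.choose k : R) ≤
      (m + 1) * n.choose (m + 1) := by
  induction m with
  | zero => simp
  | succ m ih =>
    have hV : (0 : R) ≤ ∑ k ∈ range (m + 1), (n.choose k : R) := sum_nonneg fun _ _ ↦ by positivity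
    have hc : (0 : R) ≤ n.choose (m + 1) := by positivity
    have hrec := Nat.cast_choose_succ_mul (R := R) n (m + 1)
    rw [sum_range_succ]
    push_cast at hrec ⊢
    linear_combination ih + 2 * hV + 2 * hc - hrec

theorem succ_mul_choose_mul_sum_range_le (n m : ℕ) :
    (n.choose (m + 1 + 1) : R) * (m + 1 + 1) * ∑ k ∈ range (m + 1), (n.choose k : R) ≤
      n.choose (m + 1) * (m + 1) * ∑ k ∈ range (m + 1 + 1), (n.choose k : R) := by
  have hc : (0 : R) ≤ n.choose (m + 1) := by positivity
  have hrec := Nat.cast_choose_succ_mul (R := R) n (m + 1)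
  push_cast at hrec
  have hkey := mul_le_mul_of_nonneg_right (sub_two_mul_mul_sum_range_choose_le (R := R) n m) hc
  rw [hrec, sum_range_succ _ (m + 1)]
  linear_combination hkey

theorem sum_range_choose_pos (n m : ℕ) : (0 : R) < ∑ k ∈ range (m + 1), (n.choose k : R) := by
  rw [sum_range_succ']
  exact add_pos_of_nonneg_of_pos (sum_nonneg fun _ _ ↦ by positivity) (by simp)

end

theorem stmt2_general (n m : ℕ)
    (w : ℕ → ℚ)
    (hw : ∀ l, w l = ((n.choose (l + 1) : ℚ) * (l + 1)) /
      (∑ k ∈ Finset.range (l + 1), (n.choose k : ℚ))) :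
    w (m + 1) ≤ w m := by
  rw [hw, hw, div_le_div_iff₀ (sum_range_choose_pos (R := ℚ) n _) (sum_range_choose_pos (R := ℚ) n _)]
  exact_mod_cast succ_mul_choose_mul_sum_range_le (R := ℚ) n m

/-- With `w_m = binom(n, m+1)·(m+1) / (∑_{k=0}^m binom(n,k))`, the sequence `w_m`
is nonincreasing: `w_{m+1} ≤ w_m` whenever `m + 1 < n`. -/
theorem stmt2 (n m : ℕ) (h : m + 1 < n)
    (w : ℕ → ℚ)
    (hw : ∀ l, w l = ((n.choose (l + 1) : ℚ) * (l + 1)) /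
      (∑ k ∈ Finset.range (l + 1), (n.choose k : ℚ))) :
    w (m + 1) ≤ w m :=
  stmt2_general n m w hw
end

section
/- Let Q_n be the hypercube graph and 0 ≤ S < n. Define for each vertex i the uniform probability measure ξ_i on the ball B(i,S), i.e., ξ_i = χ_{B(i,S)}/|B(i,S)|. Then for every edge ij of Q_n, ‖ξ_i − ξ_j‖_1 = 2·binom(n-1,S)/(∑_{k=0}^S binom(n,k)). -/
/-!
Both measures have density `1 / |B|` on their balls, where `|B| = ∑_{k ≤ S} binom(n,k)` does not
depend on the centre, so `‖ξ_i - ξ_j‖₁ = (|B(i,S) \ B(j,S)| + |B(j,S) \ B(i,S)|) / |B|`.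
If `i` and `j` differ exactly in the coordinate `p`, then moving the centre from `i` to `j`
increases the distance to `x` by one when `x p = i p` and decreases it by one otherwise, so
`B(i,S) \ B(j,S)` consists of the words at distance exactly `S` from `i` that agree with `i` at
`p`: they correspond to the `S`-subsets of the remaining `n - 1` coordinates.
-/

open Finset

section

variable {ι : Type*} [Fintype ι]

lemma exists_ne_iff_eq_of_hammingDist_eq_one {v w : ι → Bool} (h : hammingDist v w = 1) :
    ∃ p, ∀ q, v q ≠ w q ↔ q = p := by
  obtain ⟨p, hp⟩ := card_eq_one.mp h
  exact ⟨p, fun q => by simpa using Finset.ext_iff.mp hp q⟩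

variable [DecidableEq ι]

def diffFinsetEquiv (v : ι → Bool) : (ι → Bool) ≃ Finset ι where
  toFun x := {q | v q ≠ x q}
  invFun s q := xor (v q) (decide (q ∈ s))
  left_inv x := by funext q; cases hv : v q <;> cases hx : x q <;> simp [hv, hx]
  right_inv s := by ext q; by_cases q ∈ s <;> simp [*]

lemma mem_diffFinsetEquiv {v x : ι → Bool} {q : ι} :
    q ∈ diffFinsetEquiv v x ↔ v q ≠ x q := by
  simp [diffFinsetEquiv]

lemma hammingDist_eq_card_diffFinsetEquiv (v x : ι → Bool) :
    hammingDist v x = #(diffFinsetEquiv v x) := rfl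

lemma card_filter_hammingDist_eq (v : ι → Bool) (k : ℕ) :
    #{x | hammingDist v x = k} = (Fintype.card ι).choose k := by
  rw [← card_univ, ← card_powersetCard]
  exact card_equiv (diffFinsetEquiv v) fun x => by
    rw [mem_filter, mem_powersetCard, hammingDist_eq_card_diffFinsetEquiv]
    simp

lemma card_filter_hammingDist_le (v : ι → Bool) (S : ℕ) :
    #{x | hammingDist v x ≤ S} = ∑ k ∈ range (S + 1), (Fintype.card ι).choose k := by
  rw [card_eq_sum_card_fiberwise (f := hammingDist v) (t := range (S + 1))]
  · refine sum_congr rfl fun k hk => ?_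
    rw [← card_filter_hammingDist_eq v k, filter_filter]
    congr 1
    ext x
    simp only [mem_filter, mem_univ, true_and, mem_range] at hk ⊢
    omega
  · intro x hx
    simp only [coe_filter, mem_univ, true_and, Set.mem_ofPred_eq, coe_range, Set.mem_Iio] at hx ⊢
    omega

lemma card_filter_hammingDist_eq_and_apply_eq (v : ι → Bool) (p : ι) (k : ℕ) :
    #{x | hammingDist v x = k ∧ x p = v p} = (Fintype.card ι - 1).choose k := by
  rw [← card_univ, ← card_erase_of_mem (mem_univ p), ← card_powersetCard]
  exact card_equiv (diffFinsetEquiv v) fun x => by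
    rw [mem_filter, mem_powersetCard, subset_erase, mem_diffFinsetEquiv,
      hammingDist_eq_card_diffFinsetEquiv]
    simp [eq_comm, and_comm]

lemma hammingDist_eq_add_one_of_apply_eq {v w x : ι → Bool} {p : ι}
    (hvw : ∀ q, v q ≠ w q ↔ q = p) (hx : x p = v p) : hammingDist w x = hammingDist v x + 1 := by
  have hp : p ∉ diffFinsetEquiv v x := by simp [mem_diffFinsetEquiv, hx]
  rw [hammingDist_eq_card_diffFinsetEquiv, hammingDist_eq_card_diffFinsetEquiv,
    ← card_insert_of_notMem hp]
  congr 1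
  ext q
  simp only [mem_insert, mem_diffFinsetEquiv]
  by_cases hq : q = p
  · subst hq
    simpa [hx] using ((hvw q).mpr rfl).symm
  · rw [not_not.mp ((hvw q).not.mpr hq)]
    simp [hq]

lemma card_filter_hammingDist_le_and_not_le {v w : ι → Bool} (h : hammingDist v w = 1) (S : ℕ) :
    #{x | hammingDist v x ≤ S ∧ ¬hammingDist w x ≤ S} = (Fintype.card ι - 1).choose S := by
  obtain ⟨p, hvw⟩ := exists_ne_iff_eq_of_hammingDist_eq_one h
  have hwv : ∀ q, w q ≠ v q ↔ q = p := fun q => ne_comm.trans (hvw q)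
  rw [← card_filter_hammingDist_eq_and_apply_eq v p S]
  congr 1
  ext x
  simp only [mem_filter, mem_univ, true_and]
  by_cases hx : x p = v p
  · rw [hammingDist_eq_add_one_of_apply_eq hvw hx]
    simp only [hx, and_true]
    omega
  · have hxw : x p = w p :=
      (Bool.eq_not_iff.mpr hx).trans (Bool.eq_not_iff.mpr ((hwv p).mpr rfl)).symm
    rw [hammingDist_eq_add_one_of_apply_eq hwv hxw]
    simp only [hx, and_false, iff_false]
    omega

end

lemma sum_abs_ite_sub_ite {α R : Type*} [Fintype α] [Ring R] [LinearOrder R] [IsOrderedRing R]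
    (P Q : α → Prop) [DecidablePred P] [DecidablePred Q] {c : R} (hc : 0 ≤ c) :
    ∑ x, |(if P x then c else 0) - (if Q x then c else 0)|
      = c * (#{x | P x ∧ ¬Q x} + #{x | Q x ∧ ¬P x}) := by
  rw [card_filter, card_filter]
  push_cast
  rw [mul_add, mul_sum, mul_sum, ← sum_add_distrib]
  refine sum_congr rfl fun x _ => ?_
  by_cases P x <;> by_cases Q x <;> simp [*, abs_of_nonneg hc]

theorem stmt4_general (n S : ℕ) (i j : Fin n → Bool)
    (hadj : hammingDist i j = 1)
    (ξ : (Fin n → Bool) → (Fin n → Bool) → ℝ)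
    (hξ : ∀ v x, ξ v x = if hammingDist v x ≤ S then
        (1 : ℝ) / ((Finset.univ.filter fun y => hammingDist v y ≤ S).card : ℝ) else 0) :
    ∑ x : Fin n → Bool, |ξ i x - ξ j x|
      = 2 * ((n - 1).choose S : ℝ) / ∑ k ∈ Finset.range (S + 1), (n.choose k : ℝ) := by
  have hball : ∀ v x, ξ v x = if hammingDist v x ≤ S then
      1 / ∑ k ∈ range (S + 1), (n.choose k : ℝ) else 0 := by
    intro v x
    rw [hξ, card_filter_hammingDist_le, Fintype.card_fin]
    push_cast
    rfl
  simp_rw [hball]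
  rw [sum_abs_ite_sub_ite _ _ (by positivity), card_filter_hammingDist_le_and_not_le hadj,
    card_filter_hammingDist_le_and_not_le (hammingDist_comm i j ▸ hadj), Fintype.card_fin]
  ring

/-- In the hypercube `Q_n` with `0 ≤ S < n`, let `ξ_v` be the uniform probability
measure on the closed ball `B(v,S)`.  Then for every edge `ij`,
`‖ξ_i − ξ_j‖₁ = 2·binom(n-1,S)/(∑_{k=0}^S binom(n,k))`. -/
theorem stmt4 (n S : ℕ) (hS : S < n) (i j : Fin n → Bool)
    (hadj : hammingDist i j = 1)
    (ξ : (Fin n → Bool) → (Fin n → Bool) → ℝ)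
    (hξ : ∀ v x, ξ v x = if hammingDist v x ≤ S then
        (1 : ℝ) / ((Finset.univ.filter fun y => hammingDist v y ≤ S).card : ℝ) else 0) :
    ∑ x : Fin n → Bool, |ξ i x - ξ j x|
      = 2 * ((n - 1).choose S : ℝ) / ∑ k ∈ Finset.range (S + 1), (n.choose k : ℝ) :=
  stmt4_general n S i j hadj ξ hξ
end

section
/- Weak duality: Let G = (V,E) be a finite graph with a scale 𝒮 = {S_i}_{i∈V}. Suppose (ξ_i)_{i∈V} are probability measures on V with supp ξ_i ⊂ S_i and ‖ξ_i − ξ_j‖_1 ≤ ε for every edge ij. Suppose κ : E → ℝ≥0 with ∑_{e} κ(e) ≤ 1, η : V → ℝ, and for each k ∈ V a pseudo-flow φ_k : E → ℝ with |φ_k(e)| ≤ κ(e) for all e, such that for every k ∈ V and every i with k ∈ S_i, the net supply of φ_k at i is at least η_i. Then ∑_{i∈V} η_i ≤ ε. -/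
/-!
Average the supply constraints of `φ_k` over `k ∼ ξ_i`: since `ξ_i` lives on `S_i`,
`η_i ≤ ∑_k ξ_i(k) · (net supply of φ_k at i)`. Summing over `i` and regrouping by edges
(summation by parts), the right side becomes `∑_k ∑_{ij ∈ E} φ_k(ij) (ξ_j(k) − ξ_i(k))`,
which the capacity bound `|φ_k| ≤ κ` controls by `∑_{ij} κ(ij) ‖ξ_i − ξ_j‖_1 ≤ ε`.
-/

open Finset

section

variable {V : Type*} [Fintype V] [DecidableEq V]

def netSupply (E : Finset (V × V)) (f : V × V → ℝ) (i : V) : ℝ :=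
  (∑ e ∈ E.filter fun e => e.2 = i, f e) - ∑ e ∈ E.filter fun e => e.1 = i, f e

lemma le_sum_mul_of_le_of_ne_zero {ι : Type*} [Fintype ι] {p g : ι → ℝ} {c : ℝ}
    (hp : ∀ k, 0 ≤ p k) (hp1 : ∑ k, p k = 1) (hg : ∀ k, p k ≠ 0 → c ≤ g k) :
    c ≤ ∑ k, p k * g k :=
  calc c = ∑ k, p k * c := by rw [← sum_mul, hp1, one_mul]
    _ ≤ ∑ k, p k * g k := sum_le_sum fun k _ => by
        rcases eq_or_ne (p k) 0 with h | h
        · simp [h]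
        · exact mul_le_mul_of_nonneg_left (hg k h) (hp k)

lemma sum_mul_sum_filter_eq {α : Type*} (E : Finset α) (g : α → V) (w : V → ℝ) (f : α → ℝ) :
    ∑ i, w i * ∑ e ∈ E.filter fun e => g e = i, f e = ∑ e ∈ E, w (g e) * f e := by
  simp_rw [mul_sum, sum_filter]
  rw [sum_comm]
  simp

lemma sum_mul_netSupply (E : Finset (V × V)) (f : V × V → ℝ) (w : V → ℝ) :
    ∑ i, w i * netSupply E f i = ∑ e ∈ E, f e * (w e.2 - w e.1) := by
  simp_rw [netSupply, mul_sub, sum_sub_distrib, sum_mul_sum_filter_eq, ← sum_sub_distrib]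
  exact sum_congr rfl fun e _ => by ring

lemma sum_mul_sub_le_sum_mul_abs {α : Type*} (E : Finset α) {f κ : α → ℝ} (a b : α → ℝ)
    (hf : ∀ e ∈ E, |f e| ≤ κ e) :
    ∑ e ∈ E, f e * (a e - b e) ≤ ∑ e ∈ E, κ e * |b e - a e| :=
  sum_le_sum fun e he =>
    calc f e * (a e - b e) ≤ |f e| * |a e - b e| := by rw [← abs_mul]; exact le_abs_self _
      _ ≤ κ e * |b e - a e| := by
        rw [abs_sub_comm]; exact mul_le_mul_of_nonneg_right (hf e he) (abs_nonneg _)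

lemma sum_mul_le_of_sum_le_one {α : Type*} (E : Finset α) {κ d : α → ℝ} {ε : ℝ} (hε : 0 ≤ ε)
    (hκ0 : ∀ e, 0 ≤ κ e) (hκ1 : ∑ e ∈ E, κ e ≤ 1) (hd : ∀ e ∈ E, d e ≤ ε) :
    ∑ e ∈ E, κ e * d e ≤ ε :=
  calc ∑ e ∈ E, κ e * d e ≤ ∑ e ∈ E, κ e * ε :=
        sum_le_sum fun e he => mul_le_mul_of_nonneg_left (hd e he) (hκ0 e)
    _ ≤ ε := by rw [← sum_mul]; exact mul_le_of_le_one_left hε hκ1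
end

theorem stmt6_general {V : Type*} [Fintype V] [DecidableEq V]
    (E : Finset (V × V))
    (S : V → Finset V) (ε : ℝ) (hε : 0 ≤ ε)
    (ξ : V → V → ℝ)
    (hpos : ∀ i j, 0 ≤ ξ i j)
    (hsum : ∀ i, ∑ j, ξ i j = 1)
    (hsupp : ∀ i j, ξ i j ≠ 0 → j ∈ S i)
    (hvar : ∀ e ∈ E, ∑ k, |ξ e.1 k - ξ e.2 k| ≤ ε)
    (κ : V × V → ℝ) (hκ0 : ∀ e, 0 ≤ κ e) (hκ1 : ∑ e ∈ E, κ e ≤ 1)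
    (η : V → ℝ) (φ : V → V × V → ℝ)
    (hφ : ∀ k, ∀ e ∈ E, |φ k e| ≤ κ e)
    (hsupply : ∀ k i, k ∈ S i →
      η i ≤ (∑ e ∈ E.filter fun e => e.2 = i, φ k e)
        - ∑ e ∈ E.filter fun e => e.1 = i, φ k e) :
    ∑ i, η i ≤ ε :=
  calc ∑ i, η i ≤ ∑ i, ∑ k, ξ i k * netSupply E (φ k) i :=
        sum_le_sum fun i _ => le_sum_mul_of_le_of_ne_zero (hpos i) (hsum i)
          fun k hk => hsupply k i (hsupp i k hk)
    _ = ∑ k, ∑ e ∈ E, φ k e * (ξ e.2 k - ξ e.1 k) := by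
        rw [sum_comm]; simp_rw [sum_mul_netSupply]
    _ ≤ ∑ k, ∑ e ∈ E, κ e * |ξ e.1 k - ξ e.2 k| :=
        sum_le_sum fun k _ => sum_mul_sub_le_sum_mul_abs E _ _ (hφ k)
    _ = ∑ e ∈ E, κ e * ∑ k, |ξ e.1 k - ξ e.2 k| := by
        rw [sum_comm]; simp_rw [mul_sum]
    _ ≤ ε := sum_mul_le_of_sum_le_one E hε hκ0 hκ1 hvar

/-- Weak duality: given probability measures `ξ_i` supported in `S_i` with variation
at most `ε ≥ 0` on each edge, and pseudo-flows `φ_k` bounded by a capacity `κ` of total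
capacity at most `1` whose net supply at each `i` with `k ∈ S_i` is at least `η_i`,
we have `∑_i η_i ≤ ε`. -/
theorem stmt6 {V : Type*} [Fintype V] [DecidableEq V]
    (E : Finset (V × V)) (hE : ∀ e ∈ E, e.1 ≠ e.2)
    (S : V → Finset V) (ε : ℝ) (hε : 0 ≤ ε)
    (ξ : V → V → ℝ)
    (hpos : ∀ i j, 0 ≤ ξ i j)
    (hsum : ∀ i, ∑ j, ξ i j = 1)
    (hsupp : ∀ i j, ξ i j ≠ 0 → j ∈ S i)
    (hvar : ∀ e ∈ E, ∑ k, |ξ e.1 k - ξ e.2 k| ≤ ε)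
    (κ : V × V → ℝ) (hκ0 : ∀ e, 0 ≤ κ e) (hκ1 : ∑ e ∈ E, κ e ≤ 1)
    (η : V → ℝ) (φ : V → V × V → ℝ)
    (hφ : ∀ k, ∀ e ∈ E, |φ k e| ≤ κ e)
    (hsupply : ∀ k i, k ∈ S i →
      η i ≤ (∑ e ∈ E.filter fun e => e.2 = i, φ k e)
        - ∑ e ∈ E.filter fun e => e.1 = i, φ k e) :
    ∑ i, η i ≤ ε :=
  stmt6_general E S ε hε ξ hpos hsum hsupp hvar κ hκ0 hκ1 η φ hφ hsupply
end

section
/- Let G = (V,E) be a finite graph with scale 𝒮 = {S_i}. If there exists a partition of unity {φ_i}_{i∈V} with supp φ_i ⊂ S_i and ∑_{i∈V}|φ_i(j) − φ_i(k)| ≤ ε for all edges jk, then there exists a finite partition of unity {ψ_α} subordinated to 𝒮 whose members each take exactly one nonzero value (flat), with ∑_α |ψ_α(j) − ψ_α(k)| ≤ ε for all edges jk. -/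
open Finset

private lemma flat_decomp_aux {V : Type*} [Fintype V] :
    ∀ (N : ℕ) (f : V → ℝ), (Finset.univ.image f \ {0}).card ≤ N → (∀ j, 0 ≤ f j) →
    ∃ (n : ℕ) (g : Fin n → V → ℝ),
      (∀ r j, 0 ≤ g r j) ∧
      (∀ r j k, g r j ≠ 0 → g r k ≠ 0 → g r j = g r k) ∧
      (∀ j, ∑ r, g r j = f j) ∧
      (∀ r j, g r j ≠ 0 → f j ≠ 0) ∧
      (∀ j k, ∑ r, |g r j - g r k| ≤ |f j - f k|) := by
  intro N
  induction N with
  | zero =>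
    intro f hcard hf
    have hA : (Finset.univ.image f \ {0}) = ∅ := card_eq_zero.mp (Nat.le_zero.mp hcard)
    have hf0 : ∀ j, f j = 0 := by
      intro j
      by_contra h
      have : f j ∈ Finset.univ.image f \ {0} := by
        simp [Finset.mem_sdiff, h]
      simp [hA] at this
    exact ⟨0, Fin.elim0, fun r => r.elim0, fun r => r.elim0,
      fun j => by simp [hf0], fun r => r.elim0,
      fun j k => by simp [abs_nonneg]⟩
  | succ N ih =>
    intro f hcard hf
    by_cases hA : (Finset.univ.image f \ {0}) = ∅
    · have hf0 : ∀ j, f j = 0 := by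
        intro j
        by_contra h
        have : f j ∈ Finset.univ.image f \ {0} := by
          simp [Finset.mem_sdiff, h]
        simp [hA] at this
      exact ⟨0, Fin.elim0, fun r => r.elim0, fun r => r.elim0,
        fun j => by simp [hf0], fun r => r.elim0,
        fun j k => by simp [abs_nonneg]⟩
    · set A : Finset ℝ := Finset.univ.image f \ {0} with hAdef
      have hAne : A.Nonempty := nonempty_iff_ne_empty.mpr hA
      set m : ℝ := A.min' hAne with hmdef
      have hmA : m ∈ A := A.min'_mem hAne
      obtain ⟨hmimg, hm0⟩ := mem_sdiff.mp hmA
      have hm0' : m ≠ 0 := by simpa using hm0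
      have hmpos : 0 < m := by
        obtain ⟨j, _, hj⟩ := mem_image.mp hmimg
        have := hf j
        rw [hj] at this
        exact lt_of_le_of_ne this (Ne.symm hm0')
      have hmle : ∀ j, f j ≠ 0 → m ≤ f j := by
        intro j hj
        apply A.min'_le
        simp [hAdef, mem_sdiff, hj]
      set f' : V → ℝ := fun j => if f j = 0 then 0 else f j - m with hf'def
      have hf'nonneg : ∀ j, 0 ≤ f' j := by
        intro j
        simp only [hf'def]
        split
        · exact le_refl 0
        · next h => linarith [hmle j h]
      have hcard' : (Finset.univ.image f' \ {0}).card ≤ N := by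
        have hsub : Finset.univ.image f' \ {0} ⊆ (A.image (fun x => x - m)) \ {0} := by
          intro x hx
          obtain ⟨hx1, hx2⟩ := mem_sdiff.mp hx
          obtain ⟨j, _, hj⟩ := mem_image.mp hx1
          have hfj : f j ≠ 0 := by
            intro h
            apply (by simpa using hx2 : x ≠ 0)
            rw [← hj]; simp [hf'def, h]
          rw [mem_sdiff]
          constructor
          · apply mem_image.mpr
            exact ⟨f j, by simp [hAdef, mem_sdiff, hfj], by rw [← hj]; simp [hf'def, hfj]⟩
          · exact hx2
        calc (Finset.univ.image f' \ {0}).card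
            ≤ ((A.image (fun x => x - m)) \ {0}).card := card_le_card hsub
          _ = (A.image (fun x => x - m)).card - 1 := by
              rw [card_sdiff_of_subset]
              · simp
              · intro x hx
                rw [mem_singleton.mp hx]
                exact mem_image.mpr ⟨m, hmA, by ring⟩
          _ ≤ (N + 1) - 1 := by
              apply Nat.sub_le_sub_right
              rw [Finset.card_image_of_injective A (sub_left_injective)]
              exact hcard
          _ = N := rfl
      obtain ⟨n, g, hg1, hg2, hg3, hg4, hg5⟩ := ih f' hcard' hf'nonneg
      set g0 : V → ℝ := fun j => if f j = 0 then 0 else m with hg0def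
      refine ⟨n + 1, Fin.cons g0 g, ?_, ?_, ?_, ?_, ?_⟩
      · intro r j
        refine Fin.cases ?_ ?_ r
        · simp only [Fin.cons_zero, hg0def]
          split
          · exact le_refl 0
          · exact hmpos.le
        · intro r'; simpa using hg1 r' j
      · intro r j k
        refine Fin.cases ?_ ?_ r
        · simp only [Fin.cons_zero, hg0def]
          intro hj hk
          have hj' : f j ≠ 0 := fun h => hj (by rw [if_pos h])
          have hk' : f k ≠ 0 := fun h => hk (by rw [if_pos h])
          rw [if_neg hj', if_neg hk']
        · intro r'
          simpa using hg2 r' j k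
      · intro j
        rw [Fin.sum_univ_succ]
        simp only [Fin.cons_zero, Fin.cons_succ]
        rw [hg3 j]
        simp only [hg0def, hf'def]
        split
        · next h => simp [h]
        · ring
      · intro r j
        refine Fin.cases ?_ ?_ r
        · simp only [Fin.cons_zero, hg0def]
          intro h
          split at h
          · exact absurd rfl h
          · next h' => exact h'
        · intro r'
          simp only [Fin.cons_succ]
          intro h
          have := hg4 r' j h
          simp only [hf'def] at this
          intro hfj
          simp [hfj] at this
      · intro j k
        rw [Fin.sum_univ_succ]
        simp only [Fin.cons_zero, Fin.cons_succ]
        have key : |g0 j - g0 k| + |f' j - f' k| = |f j - f k| := by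
          simp only [hg0def, hf'def]
          by_cases hj : f j = 0 <;> by_cases hk : f k = 0
          · simp only [if_pos hj, if_pos hk, hj, hk]; simp
          · simp only [if_pos hj, if_neg hk]
            have h1 := hmle k hk
            rw [hj]
            rw [abs_of_nonpos (by linarith), abs_of_nonpos (by linarith),
              abs_of_nonpos (by linarith)]
            ring
          · simp only [if_neg hj, if_pos hk]
            have h1 := hmle j hj
            rw [hk]
            rw [abs_of_nonneg (by linarith), abs_of_nonneg (by linarith),
              abs_of_nonneg (by linarith)]
            ring
          · simp only [if_neg hj, if_neg hk]
            rw [show f j - m - (f k - m) = f j - f k by ring]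
            simp
        calc |g0 j - g0 k| + ∑ r, |g r j - g r k|
            ≤ |g0 j - g0 k| + |f' j - f' k| := by linarith [hg5 j k]
          _ = |f j - f k| := key

private lemma flat_decomp {V : Type*} [Fintype V] (f : V → ℝ) (hf : ∀ j, 0 ≤ f j) :
    ∃ (n : ℕ) (g : Fin n → V → ℝ),
      (∀ r j, 0 ≤ g r j) ∧
      (∀ r j k, g r j ≠ 0 → g r k ≠ 0 → g r j = g r k) ∧
      (∀ j, ∑ r, g r j = f j) ∧
      (∀ r j, g r j ≠ 0 → f j ≠ 0) ∧
      (∀ j k, ∑ r, |g r j - g r k| ≤ |f j - f k|) :=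
  flat_decomp_aux _ f le_rfl hf

/-- If there is a partition of unity `{φ_i}_{i∈V}` with `supp φ_i ⊆ S_i` and variation
at most `ε` on each edge, then there is a finite flat partition of unity `{ψ_α}`
subordinated to `𝒮` (each `ψ_α` takes exactly one nonzero value) with variation at
most `ε` on each edge. -/
theorem stmt8 {V : Type*} [Fintype V]
    (E : Finset (V × V)) (S : V → Finset V) (ε : ℝ)
    (φ : V → V → ℝ)
    (hpos : ∀ i j, 0 ≤ φ i j)
    (hsum : ∀ j, ∑ i, φ i j = 1)
    (hsupp : ∀ i j, φ i j ≠ 0 → j ∈ S i)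
    (hvar : ∀ e ∈ E, ∑ i, |φ i e.1 - φ i e.2| ≤ ε) :
    ∃ (N : ℕ) (ψ : Fin N → V → ℝ),
      (∀ a j, 0 ≤ ψ a j) ∧
      (∀ a j k, ψ a j ≠ 0 → ψ a k ≠ 0 → ψ a j = ψ a k) ∧
      (∀ j, ∑ a, ψ a j = 1) ∧
      (∀ a, ∃ i, ∀ j, ψ a j ≠ 0 → j ∈ S i) ∧
      (∀ e ∈ E, ∑ a, |ψ a e.1 - ψ a e.2| ≤ ε) := by
  classical
  choose n g hg1 hg2 hg3 hg4 hg5 using fun i => flat_decomp (φ i) (hpos i)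
  set T := Σ i : V, Fin (n i) with hT
  set N := Fintype.card T with hN
  set e : Fin N ≃ T := (Fintype.equivFin T).symm with he
  refine ⟨N, fun a => g (e a).1 (e a).2, ?_, ?_, ?_, ?_, ?_⟩
  · intro a j; exact hg1 _ _ j
  · intro a j k; exact hg2 _ _ j k
  · intro j
    have : ∑ a : Fin N, g (e a).1 (e a).2 j = ∑ t : T, g t.1 t.2 j :=
      e.sum_comp (fun t => g t.1 t.2 j)
    rw [this, ← Finset.univ_sigma_univ, Finset.sum_sigma]
    simp only [hg3]
    exact hsum j
  · intro a
    exact ⟨(e a).1, fun j h => hsupp _ j (hg4 _ _ j h)⟩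
  · intro ed hed
    have : ∑ a : Fin N, |g (e a).1 (e a).2 ed.1 - g (e a).1 (e a).2 ed.2|
        = ∑ t : T, |g t.1 t.2 ed.1 - g t.1 t.2 ed.2| :=
      e.sum_comp (fun t => |g t.1 t.2 ed.1 - g t.1 t.2 ed.2|)
    rw [this, ← Finset.univ_sigma_univ, Finset.sum_sigma]
    calc ∑ i, ∑ r, |g i r ed.1 - g i r ed.2|
        ≤ ∑ i, |φ i ed.1 - φ i ed.2| := Finset.sum_le_sum fun i _ => hg5 i ed.1 ed.2
      _ ≤ ε := hvar ed hed
end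

section
/- Let G be a d-regular graph (d ≥ 3) with girth c, and S ≥ 0 with 2S+1 < c. Setting ξ_i to be the uniform probability measure on B(i,S), for every edge ij one has ‖ξ_i − ξ_j‖_1 = 2(d−1)^S(2−d)/(2 − d(d−1)^S). Consequently the minimal variation ε_{S,G} of probability measures supported at scale S satisfies ε_{S,G} ≤ 2(d−1)^S(d−2)/(d(d−1)^S − 2). -/
/-!
Girth larger than `2S + 1` makes every ball of radius `S` a tree: a vertex at distance
`k + 1 ≤ S` from `i` has a unique neighbour at distance `k`, and no edge joins two vertices at the
same distance `k ≤ S`, since otherwise two shortest paths would close a cycle of length at most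
`2S + 1`. In a `d`-regular graph double counting then gives spheres of size `d (d-1)^(k-1)`, so
`|B(i,S)| (d - 2) = d (d-1)^S - 2`. For an edge `ij`, `B(i,S) \ B(j,S)` is the set of `u` with
`d(i,u) = S` and `d(j,u) = S + 1`; splitting the sphere of radius `k` around `i` according to
`d(j,u) = k ± 1` shows that this set has `(d-1)^S` elements, whence
`‖ξ_i - ξ_j‖₁ = 2 (d-1)^S / |B(i,S)|`.
-/

open scoped Classical

open Finset

theorem Real.sInf_le_of_mem_of_nonneg {s : Set ℝ} {a : ℝ} (ha : a ∈ s) (h0 : 0 ≤ a) :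
    sInf s ≤ a := by
  by_cases hs : BddBelow s
  · exact csInf_le hs ha
  · rwa [Real.sInf_of_not_bddBelow hs]

theorem Finset.sum_abs_sub_ite_mem {α R : Type*} [Fintype α] [DecidableEq α] [Ring R]
    [LinearOrder R] [IsOrderedRing R] (A B : Finset α) (c : R) :
    ∑ x, |(if x ∈ A then c else 0) - (if x ∈ B then c else 0)| = (#(A \ B) + #(B \ A)) * |c| := by
  have hpt : ∀ x, |(if x ∈ A then c else 0) - (if x ∈ B then c else 0)|
      = (if x ∈ A \ B then |c| else 0) + (if x ∈ B \ A then |c| else 0) := by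
    intro x
    by_cases hA : x ∈ A <;> by_cases hB : x ∈ B <;> simp [hA, hB]
  simp only [hpt, sum_add_distrib, sum_ite_mem, univ_inter, sum_const, nsmul_eq_mul, add_mul]

theorem cast_one_add_sum_mul_pow_mul_sub_two {d : ℕ} (hd : 1 ≤ d) (r : ℕ) :
    ((1 + ∑ k ∈ range r, d * (d - 1) ^ k : ℕ) : ℝ) * (d - 2) = d * ((d : ℝ) - 1) ^ r - 2 := by
  have hgeom := geom_sum_mul ((d : ℝ) - 1) r
  push_cast [Nat.cast_sub hd, ← mul_sum]
  linear_combination (d : ℝ) * hgeom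

namespace SimpleGraph

variable {V : Type*} {G : SimpleGraph V}

theorem Walk.IsPath.eq_of_length_add_length_lt_egirth {u v : V} {p q : G.Walk u v}
    (hp : p.IsPath) (hq : q.IsPath) (h : ((p.length + q.length : ℕ) : ℕ∞) < G.egirth) :
    p = q := by
  by_contra hne
  obtain ⟨_, _, p', q', hp', hq', hcyc⟩ := hp.exists_isCycle_of_ne hq hne
  have hlen : (p'.append q'.reverse).length ≤ p.length + q.length := by
    simpa using add_le_add (length_le_of_isSubwalk hp') (length_le_of_isSubwalk hq')
  exact (G.egirth_le_length hcyc).not_gt (h.trans_le' (by exact_mod_cast hlen))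

theorem Walk.eq_cons_of_length_eq_dist {u w i : V} (h : G.Adj u w) {p : G.Walk u i}
    {q : G.Walk w i} (hp : p.length = G.dist u i) (hq : q.length = G.dist w i)
    (hwu : G.dist w i ≤ G.dist u i)
    (hg : ((p.length + q.length + 1 : ℕ) : ℕ∞) < G.egirth) : p = cons h q := by
  have hu : u ∉ q.support := fun hu => by
    have := q.length_dropUntil_lt_length hu h.ne
    have := G.dist_le (q.dropUntil u hu)
    omega
  exact (p.isPath_of_length_eq_dist hp).eq_of_length_add_length_lt_egirth
    ((q.isPath_of_length_eq_dist hq).cons hu) (by simpa [add_assoc] using hg)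

theorem dist_ne_of_adj {i u w : V} (h : G.Adj u w) (hu : G.Reachable i u)
    (hg : ((2 * G.dist i u + 1 : ℕ) : ℕ∞) < G.egirth) : G.dist i w ≠ G.dist i u := by
  intro hwu
  rw [dist_comm (u := i), dist_comm (u := i)] at hwu
  rw [dist_comm (u := i)] at hg
  obtain ⟨p, hp⟩ := hu.symm.exists_walk_length_eq_dist
  obtain ⟨q, hq⟩ := (hu.trans h.reachable).symm.exists_walk_length_eq_dist
  have := congrArg Walk.length (Walk.eq_cons_of_length_eq_dist h hp hq hwu.le
    (by rwa [hp, hq, hwu, ← two_mul]))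
  rw [Walk.length_cons] at this
  omega

theorem eq_of_adj_of_dist_add_one_eq {i u w₁ w₂ : V} (h₁ : G.Adj u w₁) (h₂ : G.Adj u w₂)
    (hw₁ : G.dist i w₁ + 1 = G.dist i u) (hw₂ : G.dist i w₂ + 1 = G.dist i u)
    (hg : ((2 * G.dist i u : ℕ) : ℕ∞) < G.egirth) : w₁ = w₂ := by
  simp only [dist_comm (u := i)] at hw₁ hw₂ hg
  have hu : G.Reachable u i := Reachable.of_dist_ne_zero (by omega)
  obtain ⟨p, hp⟩ := hu.exists_walk_length_eq_dist
  have key : ∀ {w} (hw : G.Adj u w), G.dist w i + 1 = G.dist u i →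
      ∃ q : G.Walk w i, p = .cons hw q := by
    intro w hw hwu
    obtain ⟨q, hq⟩ := (hw.symm.reachable.trans hu).exists_walk_length_eq_dist
    exact ⟨q, Walk.eq_cons_of_length_eq_dist hw hp hq (by omega)
      (by rw [hp, hq]; convert hg using 3; omega)⟩
  obtain ⟨q₁, rfl⟩ := key h₁ hw₁
  obtain ⟨q₂, hq₂⟩ := key h₂ hw₂
  simpa using congrArg Walk.snd hq₂

theorem exists_adj_dist_add_one_eq {i u : V} (hu : 0 < G.dist i u) :
    ∃ w, G.Adj u w ∧ G.dist i w + 1 = G.dist i u := by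
  obtain ⟨p, hp⟩ := (Reachable.of_dist_ne_zero hu.ne').symm.exists_walk_length_eq_dist
  cases p with
  | nil => simp at hu
  | @cons _ w _ h q =>
    refine ⟨w, h, le_antisymm ?_ ?_⟩
    · have := G.dist_le q
      rw [Walk.length_cons, dist_comm] at hp
      rw [dist_comm]
      omega
    · have := h.symm.reachable.dist_triangle_right i
      rwa [dist_eq_one_iff_adj.mpr h.symm] at this

noncomputable section Counting

variable [Fintype V]

def sphereFinset (G : SimpleGraph V) (i : V) (k : ℕ) : Finset V :=
  {u | G.Reachable i u ∧ G.dist i u = k}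

def closedBallFinset (G : SimpleGraph V) (i : V) (r : ℕ) : Finset V :=
  {u | G.Reachable i u ∧ G.dist i u ≤ r}

def sideSphereFinset (G : SimpleGraph V) (i j : V) (k : ℕ) : Finset V :=
  {u ∈ G.sphereFinset i k | G.dist j u = k + 1}

@[simp]
theorem mem_sphereFinset {i u : V} {k : ℕ} :
    u ∈ G.sphereFinset i k ↔ G.Reachable i u ∧ G.dist i u = k := by
  simp [sphereFinset]

@[simp]
theorem mem_closedBallFinset {i u : V} {r : ℕ} :
    u ∈ G.closedBallFinset i r ↔ G.Reachable i u ∧ G.dist i u ≤ r := by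
  simp [closedBallFinset]

@[simp]
theorem mem_sideSphereFinset {i j u : V} {k : ℕ} :
    u ∈ G.sideSphereFinset i j k ↔ (G.Reachable i u ∧ G.dist i u = k) ∧ G.dist j u = k + 1 := by
  simp [sideSphereFinset]

theorem sphereFinset_zero (i : V) : G.sphereFinset i 0 = {i} := by
  ext u
  simp only [mem_sphereFinset, mem_singleton]
  exact ⟨fun ⟨hu, h⟩ => (hu.dist_eq_zero_iff.mp h).symm, by rintro rfl; simp⟩

theorem closedBallFinset_zero (i : V) : G.closedBallFinset i 0 = {i} := by
  rw [← sphereFinset_zero (G := G)]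
  ext u
  simp

theorem closedBallFinset_succ (i : V) (r : ℕ) :
    G.closedBallFinset i (r + 1) = G.closedBallFinset i r ∪ G.sphereFinset i (r + 1) := by
  ext u
  simp only [mem_closedBallFinset, mem_union, mem_sphereFinset, ← and_or_left]
  exact and_congr_right fun _ => by omega

theorem closedBallFinset_sdiff [DecidableEq V] {i j : V} (h : G.Adj i j) (r : ℕ) :
    G.closedBallFinset i r \ G.closedBallFinset j r = G.sideSphereFinset i j r := by
  ext u
  simp only [mem_sdiff, mem_closedBallFinset, mem_sideSphereFinset]
  constructor
  · rintro ⟨⟨hu, hr⟩, hj⟩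
    have hju : G.Reachable j u := h.symm.reachable.trans hu
    have h₁ := h.symm.reachable.dist_triangle_left u
    have h₂ := h.reachable.dist_triangle_left u
    rw [dist_eq_one_iff_adj.mpr h] at h₂
    rw [dist_eq_one_iff_adj.mpr h.symm] at h₁
    have : ¬G.dist j u ≤ r := fun hr' => hj ⟨hju, hr'⟩
    exact ⟨⟨hu, by omega⟩, by omega⟩
  · rintro ⟨⟨hu, hr⟩, hj⟩
    exact ⟨⟨hu, hr.le⟩, fun ⟨_, hr'⟩ => by omega⟩

theorem sphereFinset_eq_union_sideSphereFinset {i j : V} (h : G.Adj i j) (k : ℕ)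
    (hg : ((2 * (k + 1) + 1 : ℕ) : ℕ∞) < G.egirth) :
    G.sphereFinset i (k + 1) = G.sideSphereFinset i j (k + 1) ∪ G.sideSphereFinset j i k := by
  ext u
  simp only [mem_union, mem_sphereFinset, mem_sideSphereFinset]
  constructor
  · rintro ⟨hu, hk⟩
    have hne := dist_ne_of_adj h hu.symm (by rwa [dist_comm, hk])
    rw [dist_comm (u := u), dist_comm (u := u)] at hne
    rcases h.diff_dist_adj (u := u) with h' | h' | h' <;>
      rw [dist_comm (u := u), dist_comm (u := u)] at h'
    · exact absurd h' hne
    · exact Or.inl ⟨⟨hu, hk⟩, by omega⟩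
    · exact Or.inr ⟨⟨h.symm.reachable.trans hu, by omega⟩, hk⟩
  · rintro (⟨hu, _⟩ | ⟨⟨hu, _⟩, hk⟩)
    · exact hu
    · exact ⟨h.reachable.trans hu, hk⟩

variable [DecidableRel G.Adj]

theorem sphereFinset_one (i : V) : G.sphereFinset i 1 = G.neighborFinset i := by
  ext u
  simp only [mem_sphereFinset, dist_eq_one_iff_adj, mem_neighborFinset]
  exact ⟨And.right, fun h => ⟨h.reachable, h⟩⟩

theorem card_neighborFinset_filter_dist_add_one_eq {i u : V} (hu : 0 < G.dist i u)
    (hg : ((2 * G.dist i u : ℕ) : ℕ∞) < G.egirth) :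
    #{w ∈ G.neighborFinset u | G.dist i w + 1 = G.dist i u} = 1 := by
  obtain ⟨w, h, hw⟩ := exists_adj_dist_add_one_eq hu
  rw [card_eq_one]
  refine ⟨w, eq_singleton_iff_unique_mem.mpr ⟨by simp [h, hw], fun w' hw' => ?_⟩⟩
  rw [mem_filter, mem_neighborFinset] at hw'
  exact eq_of_adj_of_dist_add_one_eq hw'.1 h hw'.2 hw hg

variable {d : ℕ}

theorem card_neighborFinset_filter_dist_eq_add_one (hreg : G.IsRegularOfDegree d) {i u : V}
    (hu : 0 < G.dist i u) (hg : ((2 * G.dist i u + 1 : ℕ) : ℕ∞) < G.egirth) :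
    #{w ∈ G.neighborFinset u | G.dist i w = G.dist i u + 1} = d - 1 := by
  have hsplit := card_filter_add_card_filter_not (s := G.neighborFinset u)
    (fun w => G.dist i w + 1 = G.dist i u)
  rw [card_neighborFinset_filter_dist_add_one_eq hu ((Nat.cast_le.mpr (by omega)).trans_lt hg),
    card_neighborFinset_eq_degree, hreg u] at hsplit
  have hchildren : {w ∈ G.neighborFinset u | ¬G.dist i w + 1 = G.dist i u}
      = {w ∈ G.neighborFinset u | G.dist i w = G.dist i u + 1} := by
    refine filter_congr fun w hw => ?_
    rw [mem_neighborFinset] at hw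
    have := dist_ne_of_adj hw (Reachable.of_dist_ne_zero hu.ne') hg
    rcases hw.diff_dist_adj (u := i) with h | h | h <;> omega
  rw [hchildren] at hsplit
  omega

theorem card_sphereFinset_add_two (hreg : G.IsRegularOfDegree d) (i : V) (k : ℕ)
    (hg : ((2 * (k + 2) : ℕ) : ℕ∞) < G.egirth) :
    #(G.sphereFinset i (k + 2)) = (d - 1) * #(G.sphereFinset i (k + 1)) := by
  have := card_mul_eq_card_mul G.Adj (s := G.sphereFinset i (k + 1))
    (t := G.sphereFinset i (k + 2)) (m := d - 1) (n := 1) ?_ ?_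
  · rw [mul_one] at this
    rw [← this, mul_comm]
  · intro a ha
    obtain ⟨ha, hak⟩ := mem_sphereFinset.mp ha
    convert card_neighborFinset_filter_dist_eq_add_one hreg (i := i) (u := a) (by omega)
      ((Nat.cast_le.mpr (by omega)).trans_lt hg) using 2
    ext w
    simp only [mem_bipartiteAbove, mem_sphereFinset, mem_filter, mem_neighborFinset]
    exact ⟨fun ⟨⟨_, hw⟩, h⟩ => ⟨h, by omega⟩,
      fun ⟨h, hw⟩ => ⟨⟨ha.trans h.reachable, by omega⟩, h⟩⟩
  · intro b hb
    obtain ⟨hb, hbk⟩ := mem_sphereFinset.mp hb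
    convert card_neighborFinset_filter_dist_add_one_eq (i := i) (u := b) (by omega)
      ((Nat.cast_le.mpr (by omega)).trans_lt hg) using 2
    ext w
    simp only [mem_bipartiteBelow, mem_sphereFinset, mem_filter, mem_neighborFinset]
    exact ⟨fun ⟨⟨_, hw⟩, h⟩ => ⟨h.symm, by omega⟩,
      fun ⟨h, hw⟩ => ⟨⟨hb.trans h.reachable, by omega⟩, h.symm⟩⟩

theorem card_sphereFinset_add_one (hreg : G.IsRegularOfDegree d) (i : V) (k : ℕ)
    (hg : ((2 * (k + 1) : ℕ) : ℕ∞) < G.egirth) :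
    #(G.sphereFinset i (k + 1)) = d * (d - 1) ^ k := by
  induction k with
  | zero => rw [sphereFinset_one, card_neighborFinset_eq_degree, hreg i, pow_zero, mul_one]
  | succ k ih =>
    rw [card_sphereFinset_add_two hreg i k hg, ih ((Nat.cast_le.mpr (by omega)).trans_lt hg)]
    ring

theorem card_closedBallFinset (hreg : G.IsRegularOfDegree d) (i : V) {r : ℕ}
    (hg : ((2 * r : ℕ) : ℕ∞) < G.egirth) :
    #(G.closedBallFinset i r) = 1 + ∑ k ∈ range r, d * (d - 1) ^ k := by
  induction r with
  | zero => simp [closedBallFinset_zero]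
  | succ r ih =>
    have hdisj : Disjoint (G.closedBallFinset i r) (G.sphereFinset i (r + 1)) := by
      rw [Finset.disjoint_left]
      intro u hu hu'
      rw [mem_closedBallFinset] at hu
      rw [mem_sphereFinset] at hu'
      omega
    rw [closedBallFinset_succ, card_union_of_disjoint hdisj,
      ih ((Nat.cast_le.mpr (by omega)).trans_lt hg), card_sphereFinset_add_one hreg i r hg,
      sum_range_succ, add_assoc]

theorem card_sideSphereFinset (hreg : G.IsRegularOfDegree d) {i j : V} (h : G.Adj i j) (k : ℕ)
    (hg : ((2 * k + 1 : ℕ) : ℕ∞) < G.egirth) :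
    #(G.sideSphereFinset i j k) = (d - 1) ^ k := by
  induction k generalizing i j with
  | zero =>
    rw [pow_zero, card_eq_one]
    refine ⟨i, ?_⟩
    ext u
    simp only [mem_sideSphereFinset, mem_singleton]
    constructor
    · rintro ⟨⟨hu, h0⟩, _⟩
      exact (hu.dist_eq_zero_iff.mp h0).symm
    · rintro rfl
      simpa using h.symm
  | succ k ih =>
    have hdisj : Disjoint (G.sideSphereFinset i j (k + 1)) (G.sideSphereFinset j i k) := by
      rw [Finset.disjoint_left]
      intro u hu hu'
      rw [mem_sideSphereFinset] at hu hu'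
      omega
    have hsplit := congrArg card (sphereFinset_eq_union_sideSphereFinset h k hg)
    rw [card_union_of_disjoint hdisj, card_sphereFinset_add_one hreg i k
      ((Nat.cast_le.mpr (by omega)).trans_lt hg),
      ih h.symm ((Nat.cast_le.mpr (by omega)).trans_lt hg)] at hsplit
    rw [pow_succ', Nat.sub_one_mul]
    omega

theorem card_closedBallFinset_sdiff [DecidableEq V] (hreg : G.IsRegularOfDegree d) {i j : V}
    (h : G.Adj i j) {r : ℕ} (hg : ((2 * r + 1 : ℕ) : ℕ∞) < G.egirth) :
    #(G.closedBallFinset i r \ G.closedBallFinset j r) = (d - 1) ^ r := by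
  rw [closedBallFinset_sdiff h, card_sideSphereFinset hreg h r hg]

theorem sum_abs_sub_ite_mem_closedBallFinset [DecidableEq V] (hreg : G.IsRegularOfDegree d)
    (hd : 1 ≤ d) {i j : V} (h : G.Adj i j) {r : ℕ} (hg : ((2 * r + 1 : ℕ) : ℕ∞) < G.egirth)
    {c : ℝ} (hc : 0 ≤ c) :
    ∑ u, |(if u ∈ G.closedBallFinset i r then c else 0)
      - (if u ∈ G.closedBallFinset j r then c else 0)| = 2 * ((d : ℝ) - 1) ^ r * c := by
  rw [sum_abs_sub_ite_mem, card_closedBallFinset_sdiff hreg h hg,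
    card_closedBallFinset_sdiff hreg h.symm hg, abs_of_nonneg hc]
  push_cast [Nat.cast_sub hd]
  ring

end Counting

end SimpleGraph

open SimpleGraph

/-- For a `d`-regular graph (`d ≥ 3`) of girth `c` and `S` with `2S+1 < c`, the
uniform probability measures `ξ_i` on the balls `B(i,S)` have variation
`2(d−1)^S(2−d)/(2 − d(d−1)^S)` on every edge; consequently the minimal variation
`ε_{S,G}` of probability measures at scale `S` is at most
`2(d−1)^S(d−2)/(d(d−1)^S − 2)`. -/
theorem stmt12 {V : Type*} [Fintype V] [DecidableEq V]
    (G : SimpleGraph V) [DecidableRel G.Adj]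
    (d S : ℕ) (hd : 3 ≤ d) (hreg : G.IsRegularOfDegree d)
    (hgirth : ((2 * S + 1 : ℕ) : ℕ∞) < G.girth)
    (ξ : V → V → ℝ)
    (hξ : ∀ v u, ξ v u = if G.Reachable v u ∧ G.dist v u ≤ S then
        (1 : ℝ) / ((Finset.univ.filter fun w => G.Reachable v w ∧ G.dist v w ≤ S).card : ℝ)
      else 0) :
    (∀ i j : V, G.Adj i j →
      ∑ u, |ξ i u - ξ j u|
        = 2 * ((d : ℝ) - 1) ^ S * (2 - (d : ℝ)) / (2 - d * ((d : ℝ) - 1) ^ S))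
    ∧ sInf {ε : ℝ | ∃ ζ : V → V → ℝ,
        (∀ i u, 0 ≤ ζ i u) ∧ (∀ i, ∑ u, ζ i u = 1) ∧
        (∀ i u, ζ i u ≠ 0 → G.Reachable i u ∧ G.dist i u ≤ S) ∧
        (∀ i j : V, G.Adj i j → ∑ u, |ζ i u - ζ j u| ≤ ε)}
      ≤ 2 * ((d : ℝ) - 1) ^ S * ((d : ℝ) - 2) / ((d : ℝ) * ((d : ℝ) - 1) ^ S - 2) := by
  have hg : ((2 * S + 1 : ℕ) : ℕ∞) < G.egirth := hgirth.trans_le G.egirth.natCast_toNat_le_self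
  have hgS : ((2 * S : ℕ) : ℕ∞) < G.egirth := (Nat.cast_le.mpr (by omega)).trans_lt hg
  set n := 1 + ∑ k ∈ range S, d * (d - 1) ^ k
  have hball (v : V) : #(G.closedBallFinset v S) = n := card_closedBallFinset hreg v hgS
  have hn : (n : ℝ) * (d - 2) = d * ((d : ℝ) - 1) ^ S - 2 :=
    cast_one_add_sum_mul_pow_mul_sub_two (by omega) S
  have hξ' (v u : V) : ξ v u = if u ∈ G.closedBallFinset v S then 1 / (n : ℝ) else 0 := by
    rw [hξ, ← hball v]
    congr 1
    · simp
    · simp only [closedBallFinset]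
      congr
  have hedge (i j : V) (h : G.Adj i j) : ∑ u, |ξ i u - ξ j u| = 2 * ((d : ℝ) - 1) ^ S / n := by
    simp only [hξ']
    rw [sum_abs_sub_ite_mem_closedBallFinset hreg (by omega) h hg (by positivity), mul_one_div]
  have hd3 : (3 : ℝ) ≤ d := by exact_mod_cast hd
  have hd2 : (d : ℝ) - 2 ≠ 0 := by linarith
  have hn0 : (n : ℝ) ≠ 0 := by positivity
  have hval : 2 * ((d : ℝ) - 1) ^ S * ((d : ℝ) - 2) / ((d : ℝ) * ((d : ℝ) - 1) ^ S - 2)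
      = 2 * ((d : ℝ) - 1) ^ S / n := by
    rw [← hn, mul_div_mul_right _ _ hd2]
  refine ⟨fun i j h => ?_, ?_⟩
  · rw [hedge i j h, ← hval, ← neg_sub (d : ℝ), ← neg_sub _ (2 : ℝ), mul_neg, neg_div_neg_eq]
  rw [hval]
  refine Real.sInf_le_of_mem_of_nonneg ⟨ξ, fun i u => ?_, fun i => ?_, fun i u hu => ?_,
    fun i j h => (hedge i j h).le⟩
    (div_nonneg (mul_nonneg zero_le_two (pow_nonneg (by linarith) _)) n.cast_nonneg)
  · rw [hξ']
    positivity
  · simp only [hξ', sum_ite_mem, univ_inter, sum_const, nsmul_eq_mul, hball]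
    field_simp
  · rw [hξ'] at hu
    exact mem_closedBallFinset.mp (ite_ne_right_iff.mp hu).1
end

section
/- Let G be a locally finite graph and H a convex finite subgraph of G (for any two vertices of H in the same component of G, some G-geodesic between them lies in H). For every S ≥ 0, the minimal variation of probability measures satisfies ε_{2S, H} ≤ ε_{S, G}. -/
open scoped BigOperators

/-- A walk in `G` with support in `W` yields a walk in the induced graph `H` of equal length. -/
lemma walk_in_subgraph {V : Type*} {G : SimpleGraph V} {W : Finset V} {H : SimpleGraph W}
    (hH : ∀ a b : W, H.Adj a b ↔ G.Adj (a : V) (b : V)) :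
    ∀ {a b : V} (p : G.Walk a b), (∀ v ∈ p.support, v ∈ W) → ∀ (ha : a ∈ W) (hb : b ∈ W),
      ∃ q : H.Walk ⟨a, ha⟩ ⟨b, hb⟩, q.length = p.length := by
  intro a b p
  induction p with
  | nil => intro _ ha hb; exact ⟨SimpleGraph.Walk.nil, rfl⟩
  | @cons a c b h p ih =>
      intro hs ha hb
      have hc : c ∈ W := hs c (by simp [SimpleGraph.Walk.support_cons])
      obtain ⟨q, hq⟩ := ih (fun v hv => hs v (by simp [SimpleGraph.Walk.support_cons, hv])) hc hb
      exact ⟨SimpleGraph.Walk.cons ((hH ⟨a, ha⟩ ⟨c, hc⟩).2 h) q, by simp [hq]⟩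

/-- Triangle inequality for graph distance under reachability. -/
lemma reach_dist_triangle {V : Type*} {G : SimpleGraph V} {u v w : V}
    (h1 : G.Reachable u v) (h2 : G.Reachable v w) :
    G.dist u w ≤ G.dist u v + G.dist v w := by
  obtain ⟨p, hp⟩ := h1.exists_walk_length_eq_dist
  obtain ⟨q, hq⟩ := h2.exists_walk_length_eq_dist
  calc G.dist u w ≤ (p.append q).length := SimpleGraph.dist_le _
    _ = G.dist u v + G.dist v w := by rw [SimpleGraph.Walk.length_append, hp, hq]

/-- Let `G` be a locally finite graph and `H` the subgraph induced on a finite convex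
set `W` of vertices.  Then the minimal variation of probability measures satisfies
`ε_{2S, H} ≤ ε_{S, G}`. -/
theorem stmt18 {V : Type*} (G : SimpleGraph V) [DecidableRel G.Adj] [G.LocallyFinite]
    (W : Finset V)
    (hconv : ∀ i ∈ W, ∀ j ∈ W, G.Reachable i j →
      ∃ p : G.Walk i j, p.length = G.dist i j ∧ ∀ v ∈ p.support, v ∈ W)
    (S : ℕ)
    (H : SimpleGraph W) (hH : ∀ a b : W, H.Adj a b ↔ G.Adj (a : V) (b : V)) :
    sInf {ε : ℝ | 0 ≤ ε ∧ ∃ ξ : W → W → ℝ,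
        (∀ i u, 0 ≤ ξ i u) ∧ (∀ i, ∑ u, ξ i u = 1) ∧
        (∀ i u, ξ i u ≠ 0 → H.Reachable i u ∧ H.dist i u ≤ 2 * S) ∧
        (∀ i j : W, H.Adj i j → ∑ u, |ξ i u - ξ j u| ≤ ε)}
    ≤ sInf {ε : ℝ | 0 ≤ ε ∧ ∃ ξ : V → V → ℝ,
        (∀ i u, 0 ≤ ξ i u) ∧ (∀ i, HasSum (ξ i) 1) ∧
        (∀ i u, ξ i u ≠ 0 → G.Reachable i u ∧ G.dist i u ≤ S) ∧
        (∀ i j : V, G.Adj i j →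
          ∀ s : ℝ, HasSum (fun u => |ξ i u - ξ j u|) s → s ≤ ε)} := by
  classical
  set A := {ε : ℝ | 0 ≤ ε ∧ ∃ ξ : W → W → ℝ,
        (∀ i u, 0 ≤ ξ i u) ∧ (∀ i, ∑ u, ξ i u = 1) ∧
        (∀ i u, ξ i u ≠ 0 → H.Reachable i u ∧ H.dist i u ≤ 2 * S) ∧
        (∀ i j : W, H.Adj i j → ∑ u, |ξ i u - ξ j u| ≤ ε)} with hA
  set B := {ε : ℝ | 0 ≤ ε ∧ ∃ ξ : V → V → ℝ,
        (∀ i u, 0 ≤ ξ i u) ∧ (∀ i, HasSum (ξ i) 1) ∧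
        (∀ i u, ξ i u ≠ 0 → G.Reachable i u ∧ G.dist i u ≤ S) ∧
        (∀ i j : V, G.Adj i j →
          ∀ s : ℝ, HasSum (fun u => |ξ i u - ξ j u|) s → s ≤ ε)} with hB
  have hAbdd : BddBelow A := ⟨0, fun x hx => hx.1⟩
  -- `B` is nonempty: it contains `2`, witnessed by delta measures.
  have hBne : B.Nonempty := by
    refine ⟨2, by norm_num, fun i u => if u = i then 1 else 0, ?_, ?_, ?_, ?_⟩
    · intro i u; dsimp only; split <;> norm_num
    · intro i; exact hasSum_ite_eq i 1
    · intro i u h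
      dsimp only at h
      have hu : u = i := by by_contra h'; rw [if_neg h'] at h; exact h rfl
      subst hu
      exact ⟨SimpleGraph.Reachable.refl _, by simp [SimpleGraph.dist_self]⟩
    · intro i j hij s hs
      dsimp only at hs
      have hne : i ≠ j := hij.ne
      have heq : (fun u => |(if u = i then (1:ℝ) else 0) - (if u = j then 1 else 0)|)
          = fun u => (if u = i then (1:ℝ) else 0) + (if u = j then 1 else 0) := by
        funext u
        rcases eq_or_ne u i with rfl | h1
        · rw [if_pos rfl, if_neg hne]; norm_num
        · rw [if_neg h1]
          rcases eq_or_ne u j with rfl | h2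
          · rw [if_pos rfl]; norm_num
          · rw [if_neg h2]; norm_num
      rw [heq] at hs
      have h2 : HasSum (fun u => (if u = i then (1:ℝ) else 0) + (if u = j then 1 else 0))
          (1 + 1) := (hasSum_ite_eq i (1:ℝ)).add (hasSum_ite_eq j (1:ℝ))
      rw [hs.unique h2]; norm_num
  refine le_csInf hBne ?_
  rintro ε ⟨hε0, ξ, hpos, hsum1, hsupp, hedge⟩
  refine csInf_le hAbdd ?_
  rcases W.eq_empty_or_nonempty with hWe | hWne
  · -- W empty: everything is vacuous
    refine ⟨hε0, 0, ?_, ?_, ?_, ?_⟩ <;>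
      intro i <;> exact absurd i.2 (by simp [hWe])
  · obtain ⟨w0, hw0⟩ := hWne
    -- nearest-point projection onto W
    have key : ∀ v : V, ∃ w : W, (∃ u ∈ W, G.Reachable v u) →
        (G.Reachable v (w : V) ∧ ∀ u ∈ W, G.Reachable v u → G.dist v (w : V) ≤ G.dist v u) := by
      intro v
      by_cases h : ∃ u ∈ W, G.Reachable v u
      · obtain ⟨u0, hu0, hru0⟩ := h
        have hne : (W.filter (fun w => G.Reachable v w)).Nonempty :=
          ⟨u0, Finset.mem_filter.2 ⟨hu0, hru0⟩⟩
        obtain ⟨w, hw, hmin⟩ := Finset.exists_min_image _ (fun w => G.dist v w) hne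
        rw [Finset.mem_filter] at hw
        refine ⟨⟨w, hw.1⟩, fun _ => ⟨hw.2, fun u hu hru => hmin u (Finset.mem_filter.2 ⟨hu, hru⟩)⟩⟩
      · exact ⟨⟨w0, hw0⟩, fun h' => absurd h' h⟩
    choose p hp using key
    -- summability facts
    have hsummable : ∀ i : W, Summable (ξ (i : V)) := fun i => (hsum1 i).summable
    have hind_sum : ∀ (i : W) (u : W),
        Summable (fun v => if p v = u then ξ (i : V) v else 0) := by
      intro i u
      refine Summable.of_nonneg_of_le (fun v => ?_) (fun v => ?_) (hsummable i)
      · split <;> [exact hpos _ _; exact le_rfl]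
      · split <;> [exact le_rfl; exact hpos _ _]
    -- the pushforward measures
    set ξ' : W → W → ℝ := fun i u => ∑' v : V, if p v = u then ξ (i : V) v else 0 with hξ'
    -- key property of support points
    have hproj : ∀ (i : W) (v : V), ξ (i : V) v ≠ 0 →
        H.Reachable i (p v) ∧ H.dist i (p v) ≤ 2 * S := by
      intro i v hv
      obtain ⟨hriv, hdiv⟩ := hsupp (i : V) v hv
      have hex : ∃ u ∈ W, G.Reachable v u := ⟨i, i.2, hriv.symm⟩
      obtain ⟨hrp, hmin⟩ := hp v hex
      have hd1 : G.dist v (p v : V) ≤ S :=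
        le_trans (hmin (i : V) i.2 hriv.symm) (by rwa [SimpleGraph.dist_comm])
      have hreach : G.Reachable (i : V) (p v : V) := hriv.trans hrp
      have hd2 : G.dist (i : V) (p v : V) ≤ 2 * S := by
        calc G.dist (i : V) (p v : V) ≤ G.dist (i : V) v + G.dist v (p v : V) :=
              reach_dist_triangle hriv hrp
          _ ≤ S + S := Nat.add_le_add hdiv hd1
          _ = 2 * S := by ring
      obtain ⟨q, hqlen, hqsupp⟩ := hconv (i : V) i.2 (p v : V) (p v).2 hreach
      obtain ⟨q', hq'⟩ := walk_in_subgraph hH q hqsupp i.2 (p v).2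
      have hr' : H.Reachable i (p v) := by
        refine SimpleGraph.Walk.reachable ?_
        convert q' <;> simp
      refine ⟨hr', ?_⟩
      calc H.dist i (p v) ≤ q'.length := by
            have := SimpleGraph.dist_le q'
            convert this <;> simp
        _ = G.dist (i : V) (p v : V) := by rw [hq', hqlen]
        _ ≤ 2 * S := hd2
    refine ⟨hε0, ξ', ?_, ?_, ?_, ?_⟩
    · intro i u
      exact tsum_nonneg fun v => by split <;> [exact hpos _ _; exact le_rfl]
    · intro i
      have : ∑ u : W, ξ' i u = ∑' v : V, ∑ u : W, (if p v = u then ξ (i : V) v else 0) :=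
        (Summable.tsum_finsetSum (fun u _ => hind_sum i u)).symm
      rw [this]
      have : ∀ v : V, (∑ u : W, if p v = u then ξ (i : V) v else 0) = ξ (i : V) v := by
        intro v
        rw [Finset.sum_ite_eq Finset.univ (p v) (fun _ => ξ (i : V) v)]
        simp
      simp_rw [this]
      exact (hsum1 (i : V)).tsum_eq
    · intro i u h
      have : ∃ v : V, (if p v = u then ξ (i : V) v else 0) ≠ 0 := by
        by_contra h'
        push_neg at h'
        exact h (by simp [hξ', h', tsum_zero])
      obtain ⟨v, hv⟩ := this
      have hpv : p v = u := by by_contra h'; simp [h'] at hv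
      have hξv : ξ (i : V) v ≠ 0 := by intro h'; simp [h'] at hv
      rw [← hpv]
      exact hproj i v hξv
    · intro i j hij
      have gadj : G.Adj (i : V) (j : V) := (hH i j).1 hij
      have habs : Summable (fun v => |ξ (i : V) v - ξ (j : V) v|) :=
        ((hsummable i).sub (hsummable j)).abs
      have hs := hedge (i : V) (j : V) gadj _ habs.hasSum
      have hbound : ∀ u : W, |ξ' i u - ξ' j u|
          ≤ ∑' v : V, (if p v = u then |ξ (i : V) v - ξ (j : V) v| else 0) := by
        intro u
        have hdiff : ξ' i u - ξ' j u
            = ∑' v : V, ((if p v = u then ξ (i : V) v else 0)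
                - (if p v = u then ξ (j : V) v else 0)) := by
          rw [Summable.tsum_sub (hind_sum i u) (hind_sum j u)]
        rw [hdiff]
        have heq : ∀ v : V, |(if p v = u then ξ (i : V) v else 0)
            - (if p v = u then ξ (j : V) v else 0)|
            = (if p v = u then |ξ (i : V) v - ξ (j : V) v| else 0) := by
          intro v; split <;> simp
        calc |∑' v : V, ((if p v = u then ξ (i : V) v else 0)
                - (if p v = u then ξ (j : V) v else 0))|
            ≤ ∑' v : V, |(if p v = u then ξ (i : V) v else 0)
                - (if p v = u then ξ (j : V) v else 0)| := by
              have hsumn : Summable fun v : V => ‖(if p v = u then ξ (i : V) v else 0)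
                  - (if p v = u then ξ (j : V) v else 0)‖ := by
                simp only [Real.norm_eq_abs]
                simp_rw [heq]
                refine Summable.of_nonneg_of_le (fun v => ?_) (fun v => ?_) habs
                · split <;> [exact abs_nonneg _; exact le_rfl]
                · split <;> [exact le_rfl; exact abs_nonneg _]
              simpa using norm_tsum_le_tsum_norm hsumn
          _ = ∑' v : V, (if p v = u then |ξ (i : V) v - ξ (j : V) v| else 0) := by
              simp_rw [heq]
      have hsum_ind : ∀ u : W,
          Summable (fun v => if p v = u then |ξ (i : V) v - ξ (j : V) v| else 0) := by
        intro u
        refine Summable.of_nonneg_of_le (fun v => ?_) (fun v => ?_) habs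
        · split <;> [exact abs_nonneg _; exact le_rfl]
        · split <;> [exact le_rfl; exact abs_nonneg _]
      calc ∑ u : W, |ξ' i u - ξ' j u|
          ≤ ∑ u : W, ∑' v : V, (if p v = u then |ξ (i : V) v - ξ (j : V) v| else 0) :=
            Finset.sum_le_sum fun u _ => hbound u
        _ = ∑' v : V, ∑ u : W, (if p v = u then |ξ (i : V) v - ξ (j : V) v| else 0) :=
            (Summable.tsum_finsetSum (fun u _ => hsum_ind u)).symm
        _ = ∑' v : V, |ξ (i : V) v - ξ (j : V) v| := by
            congr 1; funext v
            rw [Finset.sum_ite_eq Finset.univ (p v) (fun _ => |ξ (i : V) v - ξ (j : V) v|)]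
            simp
        _ ≤ ε := hs
end

section
/- For each n ≥ 1, let ε_{S,n} = 2·binom(n−1,S)/(∑_{k=0}^S binom(n,k)) be the minimal variation of probability measures at scale S on the hypercube Q_n. Then for every fixed S ≥ 0, lim_{n→∞} ε_{S,n} = 2. Consequently, the disjoint union of all hypercubes ∐_n Q_n (with ℓ^1 metric) fails property A: lim_{S→∞} limsup_n ε_{S,n} = 2 ≠ 0. -/
/-!
Since `n.choose k = Θ(n ^ k)`, the terms with `k < S` are negligible in `∑_{k ≤ S} n.choose k`,
which is therefore asymptotic to `n.choose S`; and `(n - 1).choose S ~ n ^ S / S! ~ n.choose S`.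
So `ε_{S,n} ~ 2 · n.choose S / n.choose S = 2` for each fixed `S`.
-/

open Filter Asymptotics Finset Topology

lemma isLittleO_choose_choose {k S : ℕ} (h : k < S) :
    (fun n : ℕ ↦ (n.choose k : ℝ)) =o[atTop] fun n ↦ (n.choose S : ℝ) :=
  (isTheta_choose k).isBigO.trans_isLittleO <|
    ((isLittleO_pow_pow_atTop_of_lt h).comp_tendsto tendsto_natCast_atTop_atTop).trans_isBigO
      (isTheta_choose S).symm.isBigO

lemma isEquivalent_sum_range_succ_choose (S : ℕ) :
    (fun n : ℕ ↦ ∑ k ∈ range (S + 1), (n.choose k : ℝ)) ~[atTop] fun n ↦ (n.choose S : ℝ) := by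
  refine (IsLittleO.sum fun k hk ↦ isLittleO_choose_choose (mem_range.1 hk)).congr_left ?_
  simp [sum_range_succ]

lemma isEquivalent_natCast_pred :
    (fun n : ℕ ↦ ((n - 1 : ℕ) : ℝ)) ~[atTop] fun n ↦ (n : ℝ) := by
  refine ((isLittleO_const_id_atTop (-1 : ℝ)).comp_tendsto tendsto_natCast_atTop_atTop).congr'
    ?_ .rfl
  filter_upwards [eventually_ge_atTop 1] with n hn
  simp [Nat.cast_sub hn]

lemma isEquivalent_choose_pred (S : ℕ) :
    (fun n : ℕ ↦ ((n - 1).choose S : ℝ)) ~[atTop] fun n ↦ (n.choose S : ℝ) :=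
  ((isEquivalent_choose S).comp_tendsto (tendsto_sub_atTop_nat 1)).trans <|
    ((isEquivalent_natCast_pred.pow S).div .refl).trans (isEquivalent_choose S).symm

theorem tendsto_two_mul_choose_pred_div_sum_range_choose (S : ℕ) :
    Tendsto (fun n : ℕ ↦ 2 * ((n - 1).choose S : ℝ) / ∑ k ∈ range (S + 1), (n.choose k : ℝ))
      atTop (𝓝 2) := by
  have hequiv := ((IsEquivalent.refl (u := fun _ ↦ (2 : ℝ))).mul (isEquivalent_choose_pred S)).div
    (isEquivalent_sum_range_succ_choose S)
  refine hequiv.symm.tendsto_nhds (tendsto_const_nhds.congr' ?_)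
  filter_upwards [eventually_ge_atTop S] with n hn
  have : (n.choose S : ℝ) ≠ 0 := by exact_mod_cast (Nat.choose_pos hn).ne'
  simp [this]

/-- With `ε_{S,n} = 2·binom(n−1,S)/(∑_{k=0}^S binom(n,k))` the minimal variation of
probability measures at scale `S` on the hypercube `Q_n`: for every fixed `S`,
`lim_{n→∞} ε_{S,n} = 2`; hence `limsup_n ε_{S,n} = 2` for each `S`,
`lim_{S→∞} limsup_n ε_{S,n} = 2`, and `2 ≠ 0`, so the disjoint union of all
hypercubes fails property A. -/
theorem stmt19
    (ε : ℕ → ℕ → ℝ)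
    (hε : ∀ S n, ε S n
      = 2 * ((n - 1).choose S : ℝ) / ∑ k ∈ Finset.range (S + 1), (n.choose k : ℝ)) :
    (∀ S : ℕ, Filter.Tendsto (fun n : ℕ => ε S n) Filter.atTop (nhds 2))
    ∧ (∀ S : ℕ, Filter.limsup (fun n : ℕ => ε S n) Filter.atTop = 2)
    ∧ Filter.Tendsto (fun S : ℕ => Filter.limsup (fun n : ℕ => ε S n) Filter.atTop)
        Filter.atTop (nhds 2)
    ∧ (2 : ℝ) ≠ 0 := by
  have hlim (S : ℕ) : Tendsto (fun n ↦ ε S n) atTop (𝓝 2) := by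
    simpa only [hε] using tendsto_two_mul_choose_pred_div_sum_range_choose S
  have hlimsup (S : ℕ) : limsup (fun n ↦ ε S n) atTop = 2 := (hlim S).limsup_eq
  refine ⟨hlim, hlimsup, ?_, two_ne_zero⟩
  simpa only [hlimsup] using tendsto_const_nhds
end
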